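/- arXiv:1102.0158 — 6 statements merged into one kernel-verified Lean document; each statement's English description precedes it below -/
import Mathlib

section
/- Č(P,S) equals S + {t·(p − s) : t ≥ 0, p ∈ P, s ∈ S}; in particular Č(P,S) is a convex set containing P. -/
open scoped Pointwise

/-- The ray based at `s` in direction `d`. -/
def ray {m : ℕ} (s d : Fin m → ℝ) : Set (Fin m → ℝ) :=
  {x | ∃ t : ℝ, 0 ≤ t ∧ x = s + t • d}

/-- The tropical completion `Č(P,S)` of `S` in `P`: the union of `S` together with all rays
based at points of `S` that intersect `P` in more than one point. -/
def tropicalCompletion {m : ℕ} (P S : Set (Fin m → ℝ)) : Set (Fin m → ℝ) :=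
  S ∪ ⋃ (s ∈ S) (d : Fin m → ℝ)
      (_ : ∃ p ∈ ray s d ∩ P, ∃ q ∈ ray s d ∩ P, p ≠ q), ray s d

/-!
A ray from `s ∈ S` meets `P` in two points exactly when it passes through some `s + r • d ∈ P`
with `r > 0`, i.e. when its direction is a nonnegative multiple of some `p - s` with `p ∈ P`;
so `Č(P,S)` is `S` plus the cone spanned by `P - S`. Conversely a point `s' + t • (p - s)` of that
sum lies on the ray from `s` through it, which also passes through the convex combination
`(1 + t)⁻¹ • s' + (t / (1 + t)) • p` of `P`. The cone spanned by the convex set `P - S` is convex.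
-/

section DifferenceCone

variable {E : Type*} [AddCommGroup E] [Module ℝ E] {P S : Set E}

def differenceCone (P S : Set E) : Set E :=
  {x | ∃ t : ℝ, 0 ≤ t ∧ ∃ p ∈ P, ∃ s ∈ S, x = t • (p - s)}

theorem smul_sub_mem_differenceCone {t : ℝ} (ht : 0 ≤ t) {p s : E} (hp : p ∈ P) (hs : s ∈ S) :
    t • (p - s) ∈ differenceCone P S :=
  ⟨t, ht, p, hp, s, hs, rfl⟩

theorem smul_mem_differenceCone {c : ℝ} (hc : 0 ≤ c) {x : E} (hx : x ∈ differenceCone P S) :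
    c • x ∈ differenceCone P S := by
  obtain ⟨t, ht, p, hp, s, hs, rfl⟩ := hx
  rw [smul_smul]
  exact smul_sub_mem_differenceCone (mul_nonneg hc ht) hp hs

theorem add_mem_differenceCone (hP : Convex ℝ P) (hS : Convex ℝ S) {x y : E}
    (hx : x ∈ differenceCone P S) (hy : y ∈ differenceCone P S) :
    x + y ∈ differenceCone P S := by
  obtain ⟨t₁, ht₁, p₁, hp₁, s₁, hs₁, rfl⟩ := hx
  obtain ⟨t₂, ht₂, p₂, hp₂, s₂, hs₂, rfl⟩ := hy
  rcases (add_nonneg ht₁ ht₂).eq_or_lt with hT | hT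
  · obtain ⟨rfl, rfl⟩ : t₁ = 0 ∧ t₂ = 0 := ⟨by linarith, by linarith⟩
    simpa using smul_sub_mem_differenceCone le_rfl hp₁ hs₁
  -- Factor out `t₁ + t₂`; what remains is a convex combination with weights `tᵢ / (t₁ + t₂)`.
  have hw : t₁ / (t₁ + t₂) + t₂ / (t₁ + t₂) = 1 := by field_simp
  have hw₁ : 0 ≤ t₁ / (t₁ + t₂) := by positivity
  have hw₂ : 0 ≤ t₂ / (t₁ + t₂) := by positivity
  convert smul_sub_mem_differenceCone hT.le (hP hp₁ hp₂ hw₁ hw₂ hw) (hS hs₁ hs₂ hw₁ hw₂ hw)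
    using 1
  match_scalars <;> field_simp

theorem convex_differenceCone (hP : Convex ℝ P) (hS : Convex ℝ S) :
    Convex ℝ (differenceCone P S) := fun _ hx _ hy _ _ ha hb _ =>
  add_mem_differenceCone hP hS (smul_mem_differenceCone ha hx) (smul_mem_differenceCone hb hy)

theorem subset_add_differenceCone {s₀ : E} (hs₀ : s₀ ∈ S) : P ⊆ S + differenceCone P S :=
  fun p hp => ⟨s₀, hs₀, p - s₀, by simpa using smul_sub_mem_differenceCone zero_le_one hp hs₀,
    add_sub_cancel _ _⟩

end DifferenceCone

section Ray

variable {m : ℕ} {P S : Set (Fin m → ℝ)}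

theorem add_smul_mem_ray (s d : Fin m → ℝ) {t : ℝ} (ht : 0 ≤ t) : s + t • d ∈ ray s d :=
  ⟨t, ht, rfl⟩

theorem exists_pos_add_smul_mem_of_ray_inter_nontrivial {s d : Fin m → ℝ}
    (h : ∃ p ∈ ray s d ∩ P, ∃ q ∈ ray s d ∩ P, p ≠ q) : ∃ r : ℝ, 0 < r ∧ s + r • d ∈ P := by
  obtain ⟨_, ⟨⟨tp, htp, rfl⟩, hpP⟩, _, ⟨⟨tq, htq, rfl⟩, hqP⟩, hpq⟩ := h
  rcases lt_or_gt_of_ne (fun h : tp = tq => hpq (h ▸ rfl)) with h | h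
  · exact ⟨tq, htp.trans_lt h, hqP⟩
  · exact ⟨tp, htq.trans_lt h, hpP⟩

theorem ray_subset_add_differenceCone {s d : Fin m → ℝ} (hs : s ∈ S) {r : ℝ} (hr : 0 < r)
    (hrP : s + r • d ∈ P) : ray s d ⊆ S + differenceCone P S := by
  rintro _ ⟨t, ht, rfl⟩
  refine ⟨s, hs, t • d, ?_, rfl⟩
  convert smul_sub_mem_differenceCone (div_nonneg ht hr.le) hrP hs using 1
  rw [add_sub_cancel_left, smul_smul, div_mul_cancel₀ _ hr.ne']

theorem tropicalCompletion_subset_add_differenceCone (hSP : S ⊆ P) :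
    tropicalCompletion P S ⊆ S + differenceCone P S := by
  rintro x (hx | hx)
  · exact ⟨x, hx, 0, by simpa using smul_sub_mem_differenceCone le_rfl (hSP hx) hx, add_zero x⟩
  · simp only [Set.mem_iUnion] at hx
    obtain ⟨s, hs, d, hd, hx⟩ := hx
    obtain ⟨r, hr, hrP⟩ := exists_pos_add_smul_mem_of_ray_inter_nontrivial hd
    exact ray_subset_add_differenceCone hs hr hrP hx

theorem ray_subset_tropicalCompletion {s d q : Fin m → ℝ} (hs : s ∈ S) (hsP : s ∈ P)
    (hq : q ∈ ray s d ∩ P) (hqs : q ≠ s) : ray s d ⊆ tropicalCompletion P S := fun _ hx =>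
  Or.inr <| Set.mem_biUnion hs <| Set.mem_iUnion₂.2
    ⟨d, ⟨s, ⟨by simpa using add_smul_mem_ray s d le_rfl, hsP⟩, q, hq, hqs.symm⟩, hx⟩

theorem add_differenceCone_subset_tropicalCompletion (hP : Convex ℝ P) (hSP : S ⊆ P) :
    S + differenceCone P S ⊆ tropicalCompletion P S := by
  rintro x ⟨s', hs', _, ⟨t, ht, p, hp, s, hs, rfl⟩, hx⟩
  dsimp only at hx
  by_cases hxs : x = s
  · rw [hxs]
    exact Or.inl hs
  have ht₁ : 0 < 1 + t := by linarith
  have hmid : s + (1 + t)⁻¹ • (x - s) = (1 + t)⁻¹ • s' + (t / (1 + t)) • p := by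
    subst hx
    match_scalars <;> field_simp
    ring
  have hmidP : s + (1 + t)⁻¹ • (x - s) ∈ P :=
    hmid ▸ hP (hSP hs') hp (by positivity) (by positivity) (by field_simp)
  have hmid_ne : s + (1 + t)⁻¹ • (x - s) ≠ s := by
    simpa [sub_eq_zero, ht₁.ne'] using hxs
  refine ray_subset_tropicalCompletion hs (hSP hs)
    ⟨add_smul_mem_ray s _ (by positivity), hmidP⟩ hmid_ne ?_
  simpa using add_smul_mem_ray s (x - s) zero_le_one

end Ray

/-- For convex `P ⊆ ℝᵐ` and nonempty convex `S ⊆ P`, the tropical completion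
`Č(P,S)` equals the Minkowski sum `S + {t·(p − s) : t ≥ 0, p ∈ P, s ∈ S}`; in particular it
is convex and contains `P`. -/
theorem tropicalCompletion_eq_add {m : ℕ} (P S : Set (Fin m → ℝ))
    (hP : Convex ℝ P) (hS : Convex ℝ S) (hSne : S.Nonempty) (hSP : S ⊆ P) :
    tropicalCompletion P S
        = S + {x | ∃ t : ℝ, 0 ≤ t ∧ ∃ p ∈ P, ∃ s ∈ S, x = t • (p - s)} ∧
      Convex ℝ (tropicalCompletion P S) ∧ P ⊆ tropicalCompletion P S := by
  have h_eq : tropicalCompletion P S = S + differenceCone P S :=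
    (tropicalCompletion_subset_add_differenceCone hSP).antisymm
      (add_differenceCone_subset_tropicalCompletion hP hSP)
  refine ⟨h_eq, ?_, ?_⟩
  · rw [h_eq]
    exact hS.add (convex_differenceCone hP hS)
  · rw [h_eq]
    exact subset_add_differenceCone hSne.some_mem
end

section
/- If f : ℝᵐ → ℝᵏ is an affine map with f(P) ⊆ Q and f(S) ⊆ S′, then f maps the tropical completion Č(P,S) into the tropical completion Č(Q,S′). -/
lemma affine_apply_ray {m k : ℕ} (f : (Fin m → ℝ) →ᵃ[ℝ] (Fin k → ℝ))
    (s d : Fin m → ℝ) (t : ℝ) : f (s + t • d) = f s + t • f.linear d := by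
  have h : s + t • d = t • d +ᵥ s := by simp [vadd_eq_add, add_comm]
  rw [h, f.map_vadd, f.linear.map_smul]
  simp [vadd_eq_add, add_comm]

lemma affine_map_ray {m k : ℕ} (f : (Fin m → ℝ) →ᵃ[ℝ] (Fin k → ℝ))
    (s d x : Fin m → ℝ) (hx : x ∈ ray s d) : f x ∈ ray (f s) (f.linear d) := by
  obtain ⟨t, ht, rfl⟩ := hx
  exact ⟨t, ht, affine_apply_ray f s d t⟩

/-- Tropical completion is functorial under affine maps: if `f : ℝᵐ → ℝᵏ`
is affine with `f(P) ⊆ Q` and `f(S) ⊆ S′`, then `f` maps `Č(P,S)` into `Č(Q,S′)`. -/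
theorem tropicalCompletion_functorial {m k : ℕ}
    (P S : Set (Fin m → ℝ)) (Q S' : Set (Fin k → ℝ))
    (hP : Convex ℝ P) (hS : Convex ℝ S) (hSne : S.Nonempty) (hSP : S ⊆ P)
    (hQ : Convex ℝ Q) (hS' : Convex ℝ S') (hS'ne : S'.Nonempty) (hS'Q : S' ⊆ Q)
    (f : (Fin m → ℝ) →ᵃ[ℝ] (Fin k → ℝ))
    (hfP : f '' P ⊆ Q) (hfS : f '' S ⊆ S') :
    f '' tropicalCompletion P S ⊆ tropicalCompletion Q S' := by
  rintro _ ⟨x, hx, rfl⟩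
  rcases hx with hxS | hx
  · exact Or.inl (hfS ⟨x, hxS, rfl⟩)
  · simp only [Set.mem_iUnion] at hx
    obtain ⟨s, hsS, d, ⟨p, ⟨hpr, hpP⟩, q, ⟨hqr, hqP⟩, hpq⟩, hxr⟩ := hx
    by_cases hd : f.linear d = 0
    · left
      obtain ⟨t, -, hfx⟩ := affine_map_ray f s d x hxr
      rw [hfx, hd, smul_zero, add_zero]
      exact hfS ⟨s, hsS, rfl⟩
    · right
      simp only [Set.mem_iUnion]
      refine ⟨f s, hfS ⟨s, hsS, rfl⟩, f.linear d,
        ⟨f p, ⟨affine_map_ray f s d p hpr, hfP ⟨p, hpP, rfl⟩⟩,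
         f q, ⟨affine_map_ray f s d q hqr, hfP ⟨q, hqP, rfl⟩⟩, ?_⟩,
        affine_map_ray f s d x hxr⟩
      obtain ⟨t₁, -, rfl⟩ := hpr
      obtain ⟨t₂, -, rfl⟩ := hqr
      have ht : t₁ ≠ t₂ := fun h => hpq (by rw [h])
      intro h
      rw [affine_apply_ray, affine_apply_ray] at h
      have h2 : t₁ • f.linear d = t₂ • f.linear d := add_left_cancel h
      have h3 : (t₁ - t₂) • f.linear d = 0 := by
        rw [sub_smul, h2, sub_self]
      rcases smul_eq_zero.mp h3 with h4 | h4
      · exact ht (sub_eq_zero.mp h4)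
      · exact hd h4
end

section
/- If the induced real linear map A : ℝ^N → ℝ^M is surjective, then the quotient ℤ^M / A(ℤ^N) is a finite group, and the kernel of the monomial map φ_A : (ℂ*)^N → (ℂ*)^M is isomorphic as a group to (ℂ*)^{N−M} × (ℤ^M / A(ℤ^N)). In particular the kernel has exactly |ℤ^M / A(ℤ^N)| connected components. -/
/-!
Both the kernel and its component count are read off from a Smith normal form of `A`.
Real surjectivity of `A` forces `A(ℤ^N)` to have full rank in `ℤ^M` (a functional vanishing on
it is orthogonal to `A(ℝ^N) = ℝ^M`). Hence there are unimodular `U`, `V` with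
`U A V = [0 | diag(a₁, …, a_M)]`, all `aᵢ ≠ 0`, and `ℤ^M / A(ℤ^N) ≅ ⊕ ℤ/aᵢ`. The monomial map
turns matrix products into compositions, so `φ_V` carries `ker φ_{UAV}` homeomorphically and
isomorphically onto `ker φ_A`, while `ker φ_{UAV} = (ℂ*)^{N-M} × ∏ μ_{|aᵢ|}` visibly. The second
factor is finite and discrete and the first is connected, so the components are indexed by
`∏ μ_{|aᵢ|} ≅ ℤ^M / A(ℤ^N)`.
-/

/-- The monomial map `φ_A : (ℂ*)^N → (ℂ*)^M`, `φ_A(z)_j = Πᵢ zᵢ^{A_{ji}}`, as a group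
homomorphism. -/
def monomialMap {M N : ℕ} (A : Matrix (Fin M) (Fin N) ℤ) :
    (Fin N → ℂˣ) →* (Fin M → ℂˣ) where
  toFun z := fun j => ∏ i, z i ^ A j i
  map_one' := by funext j; simp
  map_mul' z w := by funext j; simp [Pi.mul_apply, mul_zpow, Finset.prod_mul_distrib]

open Module

theorem zpow_finsetSum {G ι : Type*} [CommGroup G] (s : Finset ι) (x : G) (f : ι → ℤ) :
    x ^ (∑ i ∈ s, f i) = ∏ i ∈ s, x ^ f i := by
  simpa only [zpowersHom_apply, toAdd_prod, toAdd_ofAdd] using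
    map_prod (zpowersHom G x) (fun i => Multiplicative.ofAdd (f i)) s

namespace Matrix

variable {α β γ : Type*} [Fintype α] {G : Type*} [CommGroup G]

def monomialHom (B : Matrix β α ℤ) : (α → G) →* (β → G) where
  toFun z j := ∏ i, z i ^ B j i
  map_one' := by funext j; simp
  map_mul' z w := by funext j; simp [mul_zpow, Finset.prod_mul_distrib]

@[simp]
theorem monomialHom_apply (B : Matrix β α ℤ) (z : α → G) (j : β) :
    B.monomialHom z j = ∏ i, z i ^ B j i := rfl

theorem monomialHom_mul [Fintype β] (B : Matrix γ β ℤ) (C : Matrix β α ℤ) :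
    (B * C).monomialHom = (B.monomialHom.comp C.monomialHom : (α → G) →* (γ → G)) := by
  refine MonoidHom.ext fun z => funext fun j => ?_
  simp only [monomialHom_apply, MonoidHom.comp_apply, mul_apply, zpow_finsetSum]
  rw [Finset.prod_comm]
  refine Finset.prod_congr rfl fun k _ => ?_
  rw [← Finset.prod_zpow]
  exact Finset.prod_congr rfl fun i _ => _root_.zpow_mul' ..

@[simp]
theorem monomialHom_one [DecidableEq α] :
    (1 : Matrix α α ℤ).monomialHom = MonoidHom.id (α → G) := by
  refine MonoidHom.ext fun z => funext fun j => ?_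
  simp [one_apply]

@[simp]
theorem monomialHom_zero : (0 : Matrix β α ℤ).monomialHom = (1 : (α → G) →* (β → G)) := by
  refine MonoidHom.ext fun z => funext fun j => ?_
  simp

@[simp]
theorem monomialHom_diagonal [DecidableEq α] (a : α → ℤ) (z : α → G) (i : α) :
    (diagonal a).monomialHom z i = z i ^ a i := by
  simp [diagonal_apply]

theorem monomialHom_fromCols {α' : Type*} [Fintype α'] (B : Matrix β α ℤ) (B' : Matrix β α' ℤ)
    (z : α ⊕ α' → G) :
    (fromCols B B').monomialHom z = B.monomialHom (z ∘ .inl) * B'.monomialHom (z ∘ .inr) := by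
  funext j
  simp [Fintype.prod_sum_type]

theorem monomialHom_monomialHom_of_mul_eq_one [Fintype β] [DecidableEq α] {B : Matrix α β ℤ}
    {C : Matrix β α ℤ} (h : B * C = 1) (z : α → G) : B.monomialHom (C.monomialHom z) = z := by
  rw [← MonoidHom.comp_apply, ← monomialHom_mul, h, monomialHom_one, MonoidHom.id_apply]

theorem mem_ker_monomialHom_mul_mul [Fintype β] [Fintype γ] [DecidableEq β] {U U' : Matrix β β ℤ}
    (hU : U' * U = 1) (A : Matrix β γ ℤ) (V : Matrix γ α ℤ) (z : α → G) :
    z ∈ (U * A * V).monomialHom.ker ↔ V.monomialHom z ∈ A.monomialHom.ker := by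
  simp only [monomialHom_mul, MonoidHom.mem_ker, MonoidHom.comp_apply]
  refine ⟨fun h => ?_, fun h => by rw [h, map_one]⟩
  rw [← monomialHom_monomialHom_of_mul_eq_one hU (A.monomialHom _), h, map_one]

theorem mem_ker_monomialHom_fromCols_zero_diagonal {κ : Type*} [Fintype κ] [DecidableEq α]
    (a : α → ℤ) (z : κ ⊕ α → G) :
    z ∈ ((fromCols (0 : Matrix α κ ℤ) (diagonal a)).monomialHom : (κ ⊕ α → G) →* (α → G)).ker ↔
      ∀ i, z (.inr i) ^ a i = 1 := by
  simp only [MonoidHom.mem_ker, monomialHom_fromCols, monomialHom_zero, MonoidHom.one_apply,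
    one_mul, funext_iff, monomialHom_diagonal, Function.comp_apply, Pi.one_apply]

variable [TopologicalSpace G] [IsTopologicalGroup G]

theorem continuous_monomialHom (B : Matrix β α ℤ) :
    Continuous (B.monomialHom : (α → G) → (β → G)) := by
  simp only [continuous_pi_iff, monomialHom_apply]
  fun_prop

def monomialContinuousMulEquiv [Fintype β] [DecidableEq α] [DecidableEq β] (B : Matrix β α ℤ)
    (C : Matrix α β ℤ) (hBC : B * C = 1) (hCB : C * B = 1) : (α → G) ≃ₜ* (β → G) where
  toFun := B.monomialHom
  invFun := C.monomialHom
  left_inv := monomialHom_monomialHom_of_mul_eq_one hCB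
  right_inv := monomialHom_monomialHom_of_mul_eq_one hBC
  map_mul' := map_mul _
  continuous_toFun := continuous_monomialHom B
  continuous_invFun := continuous_monomialHom C

def kerMonomialHomFromColsZeroDiagonalEquiv {κ : Type*} [Fintype κ] [DecidableEq α] (a : α → ℤ) :
    ((fromCols (0 : Matrix α κ ℤ) (diagonal a)).monomialHom : (κ ⊕ α → G) →* (α → G)).ker ≃ₜ*
      (κ → G) × ((i : α) → (zpowGroupHom (a i) : G →* G).ker) where
  toFun z := (fun k => z.1 (.inl k),
    fun i => ⟨z.1 (.inr i), (mem_ker_monomialHom_fromCols_zero_diagonal a z.1).1 z.2 i⟩)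
  invFun p := ⟨Sum.elim p.1 fun i => p.2 i,
    (mem_ker_monomialHom_fromCols_zero_diagonal a _).2 fun i => (p.2 i).2⟩
  left_inv z := by ext (k | i) <;> rfl
  right_inv p := rfl
  map_mul' z w := rfl
  continuous_toFun :=
    (continuous_pi fun _ => (continuous_apply _).comp continuous_subtype_val).prodMk
      (continuous_pi fun _ => ((continuous_apply _).comp continuous_subtype_val).subtype_mk _)
  continuous_invFun := by
    refine Continuous.subtype_mk (continuous_pi fun t => ?_) _
    cases t
    · simp only [Sum.elim_inl]; fun_prop
    · simp only [Sum.elim_inr]; fun_prop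

end Matrix

theorem monomialMap_eq_monomialHom {M N : ℕ} (A : Matrix (Fin M) (Fin N) ℤ) :
    monomialMap A = A.monomialHom :=
  rfl

def ContinuousMulEquiv.restrictSubgroup {G H : Type*} [Group G] [Group H] [TopologicalSpace G]
    [TopologicalSpace H] (e : G ≃ₜ* H) {S : Subgroup G} {T : Subgroup H}
    (h : ∀ x, x ∈ S ↔ e x ∈ T) : S ≃ₜ* T :=
  .mk' ((e : G ≃ₜ H).subtype h) fun x y => Subtype.ext (map_mul e (x : G) y)

theorem natCard_connectedComponents_of_homeomorph_prod {K X T : Type*} [TopologicalSpace K]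
    [TopologicalSpace X] [TopologicalSpace T] [ConnectedSpace X] [TotallyDisconnectedSpace T]
    (e : K ≃ₜ X × T) : Nat.card (ConnectedComponents K) = Nat.card T := by
  have hf : Continuous (Prod.snd ∘ e) := continuous_snd.comp e.continuous
  refine Nat.card_congr (.ofBijective hf.connectedComponentsLift ⟨fun u v huv => ?_, fun t => ?_⟩)
  · obtain ⟨k, rfl⟩ := ConnectedComponents.surjective_coe u
    obtain ⟨k', rfl⟩ := ConnectedComponents.surjective_coe v
    simp only [hf.connectedComponentsLift_apply_coe, Function.comp_apply] at huv
    have hslice : IsPreconnected (Set.range fun x => e.symm (x, (e k).2)) :=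
      isPreconnected_range (by fun_prop)
    refine ConnectedComponents.coe_eq_coe'.mpr (hslice.subset_connectedComponent ⟨(e k').1, ?_⟩
      ⟨(e k).1, ?_⟩)
    · simp [huv]
    · simp
  · obtain ⟨x⟩ := ‹ConnectedSpace X›.toNonempty
    exact ⟨ConnectedComponents.mk (e.symm (x, t)), by simp [hf.connectedComponentsLift_apply_coe]⟩

noncomputable def kerZpowGroupHomMulEquivZMod {n : ℤ} (hn : n ≠ 0) :
    (zpowGroupHom n : ℂˣ →* ℂˣ).ker ≃* Multiplicative (ZMod n.natAbs) :=
  have : NeZero n.natAbs := ⟨Int.natAbs_ne_zero.mpr hn⟩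
  (MulEquiv.subgroupCongr ker_zpowGroupHom_eq_rootsOfUnity).trans
    (mulEquivOfCyclicCardEq ((Complex.card_rootsOfUnity _).trans (Nat.card_zmod _).symm))

namespace Matrix

variable {m n : Type*} [Fintype m] [Fintype n]

theorem eq_zero_of_vecMul_eq_zero_of_surjective {A : Matrix m n ℤ}
    (hA : Function.Surjective (A.map (Int.cast : ℤ → ℝ)).mulVec) {r : m → ℤ}
    (hr : r ᵥ* A = 0) : r = 0 := by
  obtain ⟨x, hx⟩ := hA (Int.cast ∘ r)
  have hr' : (Int.cast ∘ r : m → ℝ) ᵥ* A.map Int.cast = 0 := by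
    funext j
    simpa [hr] using (RingHom.map_vecMul (Int.castRingHom ℝ) A r j).symm
  have hrr : (Int.cast ∘ r : m → ℝ) ⬝ᵥ (A.map Int.cast *ᵥ x) = 0 := by
    rw [dotProduct_mulVec, hr', zero_dotProduct]
  rw [hx] at hrr
  funext i
  simpa using congrFun (dotProduct_self_eq_zero.mp hrr) i

variable [DecidableEq m] [DecidableEq n]

theorem dual_eq_zero_of_range_le_ker {A : Matrix m n ℤ}
    (hA : Function.Surjective (A.map (Int.cast : ℤ → ℝ)).mulVec) {φ : Dual ℤ (m → ℤ)}
    (hφ : LinearMap.range A.mulVecLin ≤ LinearMap.ker φ) : φ = 0 := by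
  obtain ⟨r, rfl⟩ := (dotProductEquiv ℤ m).surjective φ
  have hr : r ᵥ* A = 0 := by
    funext j
    simpa [vecMul_apply] using hφ (LinearMap.mem_range_self A.mulVecLin (Pi.single j 1))
  rw [eq_zero_of_vecMul_eq_zero_of_surjective hA hr, map_zero]

theorem finrank_range_mulVecLin_of_surjective {A : Matrix m n ℤ}
    (hA : Function.Surjective (A.map (Int.cast : ℤ → ℝ)).mulVec) :
    finrank ℤ (LinearMap.range A.mulVecLin) = finrank ℤ (m → ℤ) := by
  obtain ⟨k, snf⟩ := (LinearMap.range A.mulVecLin).smithNormalForm (Pi.basisFun ℤ m)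
  have hf : Function.Surjective snf.f := by
    intro i
    by_contra hi
    have h0 := dual_eq_zero_of_range_le_ker hA
      (snf.le_ker_coord_of_notMem_range (by simpa using hi))
    simpa using DFunLike.congr_fun h0 (snf.bM i)
  rw [finrank_eq_card_basis snf.bN, finrank_fintype_fun_eq_card,
    ← Fintype.card_of_bijective ⟨snf.f.injective, hf⟩]

end Matrix

theorem LinearMap.exists_basis_sum_ker_of_basis_range {R E F ι : Type*} [CommRing R] [IsDomain R]
    [IsPrincipalIdealRing R] [AddCommGroup E] [Module R E] [Module.Free R E] [Module.Finite R E]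
    [AddCommGroup F] [Module R F] [Fintype ι] (f : E →ₗ[R] F) (c : Basis ι R (range f)) {k : ℕ}
    (hk : k + Fintype.card ι = finrank R E) :
    ∃ B : Basis (Fin k ⊕ ι) R E, (∀ j, f (B (.inl j)) = 0) ∧ ∀ i, f (B (.inr i)) = c i := by
  have : Projective R (range f) := .of_basis c
  obtain ⟨l, hl⟩ := f.rangeRestrict.exists_rightInverse_of_surjective f.range_rangeRestrict
  obtain ⟨e, -, he⟩ := (exact_subtype_ker_map f.rangeRestrict).splitSurjectiveEquiv
    (Submodule.injective_subtype _) ⟨l, hl⟩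
  have hK : finrank R (ker f.rangeRestrict) = k := by
    rw [e.finrank_eq, finrank_prod, finrank_eq_card_basis c] at hk
    omega
  have hfe : ∀ p, f (e.symm p) = p.2 := fun p => by
    simpa using congrArg Subtype.val (LinearMap.congr_fun he (e.symm p))
  exact ⟨(finBasisOfFinrankEq R _ hK |>.prod c).map e.symm, fun j => by simp [hfe],
    fun i => by simp [hfe]⟩

theorem Matrix.exists_mul_mul_eq_fromCols_zero_diagonal {m n : Type*} [Fintype m] [Fintype n]
    [DecidableEq m] [DecidableEq n] (A : Matrix m n ℤ)
    (hA : finrank ℤ (LinearMap.range A.mulVecLin) = finrank ℤ (m → ℤ)) {k : ℕ}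
    (hk : k + Fintype.card m = Fintype.card n) :
    ∃ (U U' : Matrix m m ℤ) (V : Matrix n (Fin k ⊕ m) ℤ) (V' : Matrix (Fin k ⊕ m) n ℤ),
      U' * U = 1 ∧ V * V' = 1 ∧ V' * V = 1 ∧
      U * A * V = fromCols 0 (diagonal (Submodule.smithNormalFormCoeffs (Pi.basisFun ℤ m) hA)) := by
  set b' := Submodule.smithNormalFormTopBasis (Pi.basisFun ℤ m) hA with hb'
  obtain ⟨B, hB₀, hB⟩ := A.mulVecLin.exists_basis_sum_ker_of_basis_range
    (Submodule.smithNormalFormBotBasis (Pi.basisFun ℤ m) hA) (by simpa using hk)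
  refine ⟨b'.toMatrix (Pi.basisFun ℤ m), (Pi.basisFun ℤ m).toMatrix b',
    (Pi.basisFun ℤ n).toMatrix B, B.toMatrix (Pi.basisFun ℤ n), Basis.toMatrix_mul_toMatrix_flip ..,
    Basis.toMatrix_mul_toMatrix_flip .., Basis.toMatrix_mul_toMatrix_flip .., ?_⟩
  have hA' : LinearMap.toMatrix (Pi.basisFun ℤ n) (Pi.basisFun ℤ m) A.mulVecLin = A := by
    ext i j
    simp [LinearMap.toMatrix_apply]
  have hUAV : b'.toMatrix (Pi.basisFun ℤ m) * A * (Pi.basisFun ℤ n).toMatrix B =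
      LinearMap.toMatrix B b' A.mulVecLin := by
    conv_lhs => rw [← hA']
    exact basis_toMatrix_mul_linearMap_toMatrix_mul_basis_toMatrix ..
  rw [hUAV]
  ext i (j | j)
  · simp [LinearMap.toMatrix_apply, hB₀]
  · simp only [LinearMap.toMatrix_apply, hB, Submodule.smithNormalFormBotBasis_def, ← hb',
      map_smul, Basis.repr_self, Finsupp.smul_apply, Finsupp.single_apply, fromCols_apply_inr,
      diagonal_apply]
    obtain rfl | h := eq_or_ne i j
    · simp
    · simp [h, h.symm]

/-- If the induced real linear map of an integer matrix `A` is surjective,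
then `ℤ^M / A(ℤ^N)` is finite, and the kernel of `φ_A` is isomorphic as a group to
`(ℂ*)^{N−M} × (ℤ^M / A(ℤ^N))`; in particular the kernel has exactly `|ℤ^M / A(ℤ^N)|`
connected components. -/
theorem monomial_map_kernel {M N : ℕ} (A : Matrix (Fin M) (Fin N) ℤ)
    (hA : Function.Surjective fun x : Fin N → ℝ => (A.map (Int.cast : ℤ → ℝ)).mulVec x) :
    Finite ((Fin M → ℤ) ⧸ LinearMap.range (Matrix.mulVecLin A)) ∧
      Nonempty ((MonoidHom.ker (monomialMap A)) ≃*
        ((Fin (N - M) → ℂˣ) ×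
          Multiplicative ((Fin M → ℤ) ⧸ LinearMap.range (Matrix.mulVecLin A)))) ∧
      Nat.card (ConnectedComponents (MonoidHom.ker (monomialMap A)))
        = Nat.card ((Fin M → ℤ) ⧸ LinearMap.range (Matrix.mulVecLin A)) := by
  have hrank := A.finrank_range_mulVecLin_of_surjective hA
  have hMN : M ≤ N := by
    simpa [hrank] using LinearMap.finrank_range_le A.mulVecLin
  obtain ⟨U, U', V, V', hU, hVV', hV'V, hD⟩ := A.exists_mul_mul_eq_fromCols_zero_diagonal hrank
    (k := N - M) (by simp only [Fintype.card_fin]; omega)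
  set a := Submodule.smithNormalFormCoeffs (Pi.basisFun ℤ (Fin M)) hrank
  let T := (i : Fin M) → (zpowGroupHom (a i) : ℂˣ →* ℂˣ).ker
  have hker : ∀ z, z ∈ (Matrix.fromCols 0 (Matrix.diagonal a)).monomialHom.ker ↔
      V.monomialHom z ∈ (monomialMap A).ker := by
    rw [← hD, monomialMap_eq_monomialHom]
    exact Matrix.mem_ker_monomialHom_mul_mul hU A V
  let e : (monomialMap A).ker ≃ₜ* (Fin (N - M) → ℂˣ) × T :=
    ((Matrix.monomialContinuousMulEquiv V V' hVV' hV'V).restrictSubgroup hker).symm.trans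
      (Matrix.kerMonomialHomFromColsZeroDiagonalEquiv a)
  let eT : T ≃* Multiplicative ((Fin M → ℤ) ⧸ LinearMap.range A.mulVecLin) :=
    (MulEquiv.piCongrRight fun i =>
      kerZpowGroupHomMulEquivZMod (Submodule.smithNormalFormCoeffs_ne_zero _ hrank i)).trans
      ((MulEquiv.piMultiplicative _).symm.trans
        (AddEquiv.toMultiplicative (Submodule.quotientEquivPiZMod _ _ hrank).symm))
  have hQ := Submodule.finiteQuotientOfFreeOfRankEq _ hrank
  have : Finite T := .of_equiv _ eT.symm.toEquiv
  refine ⟨hQ, ⟨e.toMulEquiv.trans (.prodCongr (.refl _) eT)⟩, ?_⟩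
  rw [natCard_connectedComponents_of_homeomorph_prod e.toHomeomorph, Nat.card_congr eT.toEquiv]
  rfl
end

section
/- Let a, b ∈ ℤ and let f be a holomorphic nowhere-vanishing function on ℂ ∖ {0, 1}. If there exist constants 0 < m ≤ M such that m ≤ |f(z)·z^{−a}·(z−1)^{−b}| ≤ M for all z ∈ ℂ ∖ {0,1}, then there exists c ∈ ℂ* with f(z) = c·zᵃ·(z−1)ᵇ for all z ∈ ℂ ∖ {0,1}. -/
/-!
The quotient `g z = f z * z ^ (-a) * (z - 1) ^ (-b)` is holomorphic on `ℂ ∖ {0, 1}` and bounded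
there, so by Riemann's removable singularity theorem (applied at each puncture in turn) it extends
to a bounded entire function, which is a constant `c` by Liouville. The lower bound `m ≤ ‖g‖`
forces `c ≠ 0`, and solving `g z = c` for `f z` gives the formula.
-/

open Complex Set Bornology Function Filter Topology

section

variable {E : Type*} [NormedAddCommGroup E]

theorem bddAbove_norm_comp_image_of_isBounded {g : ℂ → E} {s : Set ℂ}
    (hb : IsBounded (g '' s)) : BddAbove (norm ∘ g '' s) := by
  obtain ⟨C, hC⟩ := isBounded_iff_forall_norm_le.mp hb
  exact ⟨C, by rintro _ ⟨z, hz, rfl⟩; exact hC _ (mem_image_of_mem g hz)⟩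

variable [NormedSpace ℂ E] [CompleteSpace E]

theorem exists_differentiable_eqOn_compl_of_finite {s : Set ℂ} (hs : s.Finite) :
    ∀ {g : ℂ → E}, DifferentiableOn ℂ g sᶜ → IsBounded (g '' sᶜ) →
      ∃ G : ℂ → E, Differentiable ℂ G ∧ IsBounded (range G) ∧ EqOn G g sᶜ := by
  induction s, hs using Set.Finite.induction_on with
  | empty =>
    intro g hg hb
    exact ⟨g, differentiableOn_univ.mp (by simpa using hg), by simpa using hb, eqOn_refl _ _⟩
  | @insert a s ha hs ih =>
    intro g hg hb
    have hcompl : (insert a s)ᶜ = sᶜ \ {a} := by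
      rw [insert_eq, compl_union, inter_comm, sdiff_eq]
    rw [hcompl] at hg hb
    set g' := update g a (limUnder (𝓝[≠] a) g)
    have hg' : DifferentiableOn ℂ g' sᶜ :=
      differentiableOn_update_limUnder_of_bddAbove (hs.isClosed.isOpen_compl.mem_nhds ha) hg
        (bddAbove_norm_comp_image_of_isBounded hb)
    have hagree : EqOn g' g (sᶜ \ {a}) := fun z hz => update_of_ne hz.2 _ _
    have hb' : IsBounded (g' '' sᶜ) := by
      refine (hb.insert (g' a)).subset ?_
      rintro _ ⟨z, hz, rfl⟩
      rcases eq_or_ne z a with rfl | hza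
      · exact mem_insert _ _
      · exact mem_insert_of_mem _ ⟨z, ⟨hz, hza⟩, (hagree ⟨hz, hza⟩).symm⟩
    obtain ⟨G, hGd, hGb, hGg'⟩ := ih hg' hb'
    exact ⟨G, hGd, hGb, by rw [hcompl]; exact fun z hz => (hGg' hz.1).trans (hagree hz)⟩

theorem exists_eqOn_const_of_finite_of_isBounded {s : Set ℂ} (hs : s.Finite) {g : ℂ → E}
    (hg : DifferentiableOn ℂ g sᶜ) (hb : IsBounded (g '' sᶜ)) : ∃ c : E, EqOn g (fun _ => c) sᶜ := by
  obtain ⟨G, hGd, hGb, hGg⟩ := exists_differentiable_eqOn_compl_of_finite hs hg hb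
  obtain ⟨c, hc⟩ := hGd.exists_const_forall_eq_of_bounded hGb
  exact ⟨c, fun z hz => (hGg hz).symm.trans (hc z)⟩

end

theorem differentiableOn_mul_zpow_mul_sub_one_zpow {f : ℂ → ℂ} (a b : ℤ)
    (hf : DifferentiableOn ℂ f ({0, 1} : Set ℂ)ᶜ) :
    DifferentiableOn ℂ (fun z => f z * z ^ a * (z - 1) ^ b) ({0, 1} : Set ℂ)ᶜ := by
  intro z hz
  simp only [mem_compl_iff, mem_insert_iff, mem_singleton_iff, not_or] at hz
  have hza : DifferentiableAt ℂ (fun z : ℂ => z ^ a) z := differentiableAt_zpow.2 (Or.inl hz.1)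
  have hzb : DifferentiableAt ℂ (fun z : ℂ => (z - 1) ^ b) z :=
    (differentiableAt_id.sub_const 1).zpow (Or.inl (sub_ne_zero.2 hz.2))
  exact ((hf z (by simp [hz])).mul hza.differentiableWithinAt).mul hzb.differentiableWithinAt

theorem eq_mul_zpow_mul_sub_one_zpow {w z c : ℂ} (a b : ℤ) (hz₀ : z ≠ 0) (hz₁ : z ≠ 1)
    (h : w * z ^ (-a) * (z - 1) ^ (-b) = c) : w = c * z ^ a * (z - 1) ^ b := by
  have hz₁' : z - 1 ≠ 0 := sub_ne_zero.2 hz₁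
  rw [← h, zpow_neg, zpow_neg]
  field_simp

theorem three_punctured_classification_general (a b : ℤ) (f : ℂ → ℂ)
    (hf : DifferentiableOn ℂ f (({0, 1} : Set ℂ)ᶜ))
    (m M : ℝ) (hm : 0 < m)
    (hbd : ∀ z ∈ (({0, 1} : Set ℂ)ᶜ),
      m ≤ ‖f z * z ^ (-a) * (z - 1) ^ (-b)‖ ∧
        ‖f z * z ^ (-a) * (z - 1) ^ (-b)‖ ≤ M) :
    ∃ c : ℂ, c ≠ 0 ∧ ∀ z ∈ (({0, 1} : Set ℂ)ᶜ), f z = c * z ^ a * (z - 1) ^ b := by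
  have hbounded : IsBounded ((fun z => f z * z ^ (-a) * (z - 1) ^ (-b)) '' ({0, 1} : Set ℂ)ᶜ) :=
    isBounded_iff_forall_norm_le.mpr ⟨M, by rintro _ ⟨z, hz, rfl⟩; exact (hbd z hz).2⟩
  obtain ⟨c, hc⟩ := exists_eqOn_const_of_finite_of_isBounded (toFinite _)
    (differentiableOn_mul_zpow_mul_sub_one_zpow (-a) (-b) hf) hbounded
  have h2 : (2 : ℂ) ∈ ({0, 1} : Set ℂ)ᶜ := by norm_num
  have hc₀ : c ≠ 0 := by
    rintro rfl
    have hc₂ : f 2 * 2 ^ (-a) * (2 - 1) ^ (-b) = 0 := hc h2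
    have := (hbd 2 h2).1
    rw [hc₂, norm_zero] at this
    linarith
  refine ⟨c, hc₀, fun z hz => ?_⟩
  simp only [mem_compl_iff, mem_insert_iff, mem_singleton_iff, not_or] at hz
  exact eq_mul_zpow_mul_sub_one_zpow a b hz.1 hz.2 (hc (by simp [hz]))

/-- Let `a, b ∈ ℤ` and let `f` be holomorphic and nowhere vanishing on
`ℂ ∖ {0, 1}`.  If `|f(z)·z^{−a}·(z−1)^{−b}|` is bounded above and below by positive
constants, then `f(z) = c·zᵃ·(z−1)ᵇ` for some `c ∈ ℂ*`. -/
theorem three_punctured_classification (a b : ℤ) (f : ℂ → ℂ)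
    (hf : DifferentiableOn ℂ f (({0, 1} : Set ℂ)ᶜ))
    (hne : ∀ z ∈ (({0, 1} : Set ℂ)ᶜ), f z ≠ 0)
    (m M : ℝ) (hm : 0 < m) (hmM : m ≤ M)
    (hbd : ∀ z ∈ (({0, 1} : Set ℂ)ᶜ),
      m ≤ ‖f z * z ^ (-a) * (z - 1) ^ (-b)‖ ∧
        ‖f z * z ^ (-a) * (z - 1) ^ (-b)‖ ≤ M) :
    ∃ c : ℂ, c ≠ 0 ∧ ∀ z ∈ (({0, 1} : Set ℂ)ᶜ), f z = c * z ^ a * (z - 1) ^ b :=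
  three_punctured_classification_general a b f hf m M hm hbd
end

section
/- Let f be a holomorphic nowhere-vanishing function on ℂ ∖ {0} and suppose there exist k ∈ ℤ and constants 0 < m ≤ M with m ≤ |f(z)·z^{−k}| ≤ M for all z ≠ 0. Then there exists c ∈ ℂ* such that f(z) = c·zᵏ for all z ∈ ℂ ∖ {0}. -/
open Set Filter Topology

/-- The singularity is removable and the extension is a bounded entire function (Liouville). -/
theorem Complex.exists_eqOn_const_of_differentiableOn_compl_singleton
    {E : Type*} [NormedAddCommGroup E] [NormedSpace ℂ E] [CompleteSpace E]
    {g : ℂ → E} {a : ℂ} (hg : DifferentiableOn ℂ g {a}ᶜ)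
    (hbdd : Bornology.IsBounded (g '' {a}ᶜ)) :
    ∃ c : E, EqOn g (fun _ => c) {a}ᶜ := by
  set h := Function.update g a (limUnder (𝓝[≠] a) g)
  have hh : Differentiable ℂ h := by
    rw [← differentiableOn_univ]
    refine Complex.differentiableOn_update_limUnder_of_bddAbove Filter.univ_mem ?_ ?_
    · simpa [compl_eq_univ_sdiff] using hg
    · obtain ⟨C, hC⟩ := isBounded_iff_forall_norm_le.mp hbdd
      refine ⟨C, forall_mem_image.mpr fun z hz => hC _ (mem_image_of_mem g ?_)⟩
      simpa using hz.2
  have heq : EqOn h g {a}ᶜ := fun z hz => Function.update_of_ne hz _ _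
  have hrange : Bornology.IsBounded (range h) := by
    refine hbdd.closure.subset ?_
    rw [← image_univ, ← closure_compl_singleton a, ← heq.image_eq]
    exact image_closure_subset_closure_image hh.continuous
  exact ⟨h a, fun z hz => (heq hz).symm.trans (hh.apply_eq_apply_of_bounded hrange z a)⟩

theorem punctured_plane_classification_general (f : ℂ → ℂ)
    (hf : DifferentiableOn ℂ f (({0} : Set ℂ)ᶜ))
    (k : ℤ) (m M : ℝ) (hm : 0 < m)
    (hbd : ∀ z ∈ (({0} : Set ℂ)ᶜ),
      m ≤ ‖f z * z ^ (-k)‖ ∧ ‖f z * z ^ (-k)‖ ≤ M) :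
    ∃ c : ℂ, c ≠ 0 ∧ ∀ z ∈ (({0} : Set ℂ)ᶜ), f z = c * z ^ k := by
  have hg : DifferentiableOn ℂ (fun z => f z * z ^ (-k)) {0}ᶜ :=
    hf.mul (differentiableOn_zpow (-k) _ (Or.inl (notMem_compl_iff.mpr rfl)))
  have hbdd : Bornology.IsBounded ((fun z => f z * z ^ (-k)) '' {0}ᶜ) :=
    isBounded_iff_forall_norm_le.mpr ⟨M, forall_mem_image.mpr fun z hz => (hbd z hz).2⟩
  obtain ⟨c, hc⟩ := Complex.exists_eqOn_const_of_differentiableOn_compl_singleton hg hbdd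
  have hone : (1 : ℂ) ∈ ({0} : Set ℂ)ᶜ := one_ne_zero
  refine ⟨c, ?_, fun z hz => ?_⟩
  · rintro rfl
    have hzero : f 1 * 1 ^ (-k) = 0 := hc hone
    have := (hbd 1 hone).1
    rw [hzero, norm_zero] at this
    linarith
  · have hz0 : z ≠ 0 := hz
    calc f z = f z * z ^ (-k) * z ^ k := by
          rw [mul_assoc, ← zpow_add₀ hz0, neg_add_cancel, zpow_zero, mul_one]
      _ = c * z ^ k := congrArg (· * z ^ k) (hc hz)

/-- Let `f` be holomorphic and nowhere vanishing on `ℂ ∖ {0}` and suppose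
`|f(z)·z^{−k}|` is bounded above and below by positive constants.  Then `f(z) = c·zᵏ` for
some `c ∈ ℂ*`. -/
theorem punctured_plane_classification (f : ℂ → ℂ)
    (hf : DifferentiableOn ℂ f (({0} : Set ℂ)ᶜ))
    (hne : ∀ z ∈ (({0} : Set ℂ)ᶜ), f z ≠ 0)
    (k : ℤ) (m M : ℝ) (hm : 0 < m) (hmM : m ≤ M)
    (hbd : ∀ z ∈ (({0} : Set ℂ)ᶜ),
      m ≤ ‖f z * z ^ (-k)‖ ∧ ‖f z * z ^ (-k)‖ ≤ M) :
    ∃ c : ℂ, c ≠ 0 ∧ ∀ z ∈ (({0} : Set ℂ)ᶜ), f z = c * z ^ k :=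
  punctured_plane_classification_general f hf k m M hm hbd
end

section
/- Let q be a holomorphic function on ℂ ∖ {0, 1} such that the functions z·q(z) (near 0), (z−1)·q(z) (near 1), and z³·q(z) (near ∞) are all bounded; that is, there exist C > 0 and r > 0 with |z·q(z)| ≤ C for 0 < |z| < r, |(z−1)·q(z)| ≤ C for 0 < |z−1| < r, and |z³·q(z)| ≤ C for |z| > 1/r. Then q is identically zero. -/
/-!
Multiplying by `z (z - 1)` turns `q` into a function `g` that is holomorphic off `{0, 1}`,
bounded near `0` and `1`, and `O(1/z)` at infinity. By Riemann's removable singularity theorem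
`g` agrees off `{0, 1}` with an entire function tending to `0` at infinity, which vanishes by
Liouville's theorem.
-/

open Filter Topology Function Asymptotics Bornology

theorem Complex.exists_differentiable_eqOn_compl_of_isBigO_one {E : Type*} [NormedAddCommGroup E]
    [NormedSpace ℂ E] [CompleteSpace E] {f : ℂ → E} {s : Finset ℂ}
    (hd : DifferentiableOn ℂ f (↑s)ᶜ) (hb : ∀ c ∈ s, f =O[𝓝[≠] c] fun _ => (1 : ℝ)) :
    ∃ F : ℂ → E, Differentiable ℂ F ∧ Set.EqOn F f (↑s)ᶜ := by
  classical
  induction s using Finset.induction_on generalizing f with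
  | empty => exact ⟨f, by simpa [differentiableOn_univ] using hd, fun _ _ => rfl⟩
  | insert a s ha ih =>
    set f' := update f a (limUnder (𝓝[≠] a) f)
    have hf' : DifferentiableOn ℂ f' (↑s)ᶜ := by
      refine differentiableOn_update_limUnder_of_isLittleO
        (s.finite_toSet.isClosed.isOpen_compl.mem_nhds ha) ?_ ?_
      · exact hd.mono fun z hz => by simpa [not_or] using And.intro hz.2 hz.1
      · exact ((isBigO_one_iff ℝ).mp ((hb a (s.mem_insert_self a)).sub
          (isBigO_const_one ℝ (f a) _))).isLittleO_sub_self_inv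
    have hf'b : ∀ c ∈ s, f' =O[𝓝[≠] c] fun _ => (1 : ℝ) := by
      intro c hc
      refine (hb c (s.mem_insert_of_mem hc)).congr' ?_ EventuallyEq.rfl
      filter_upwards [nhdsWithin_le_nhds (isOpen_compl_singleton.mem_nhds
        (ne_of_mem_of_not_mem hc ha))] with z hz
      exact (update_of_ne hz _ _).symm
    obtain ⟨F, hF, hFf'⟩ := ih hf' hf'b
    refine ⟨F, hF, fun z hz => ?_⟩
    simp only [Finset.coe_insert, Set.mem_compl_iff, Set.mem_insert_iff, not_or] at hz
    rw [hFf' hz.2]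
    exact update_of_ne hz.1 _ _

theorem Asymptotics.isBigO_one_nhdsNE_mul_of_norm_le {k f : ℂ → ℂ} {c : ℂ} {C r : ℝ} (hr : 0 < r)
    (hk : ContinuousAt k c) (hf : ∀ z, 0 < ‖z - c‖ → ‖z - c‖ < r → ‖f z‖ ≤ C) :
    (fun z => k z * f z) =O[𝓝[≠] c] fun _ => (1 : ℝ) := by
  have hf' : f =O[𝓝[≠] c] fun _ => (1 : ℝ) := by
    refine IsBoundedUnder.isBigO_one ℝ ⟨C, eventually_map.2 ?_⟩
    filter_upwards [self_mem_nhdsWithin, nhdsWithin_le_nhds (Metric.ball_mem_nhds c hr)]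
      with z hzc hz
    exact hf z (norm_pos_iff.2 (sub_ne_zero.2 hzc)) (by rwa [Metric.mem_ball, dist_eq_norm] at hz)
  simpa using ((hk.tendsto.mono_left nhdsWithin_le_nhds).isBigO_one ℝ).mul hf'

theorem tendsto_mul_sub_one_mul_cocompact_of_norm_pow_three_mul_le {q : ℂ → ℂ} {C R : ℝ}
    (hq : ∀ z : ℂ, R < ‖z‖ → ‖z ^ 3 * q z‖ ≤ C) :
    Tendsto (fun z => z * (z - 1) * q z) (cocompact ℂ) (𝓝 0) := by
  have hdecomp : ∀ z : ℂ, z * (z - 1) * q z = (z⁻¹ - z⁻¹ ^ 2) * (z ^ 3 * q z) := by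
    intro z
    rcases eq_or_ne z 0 with rfl | hz
    · simp
    · field_simp
  have hlim : Tendsto (fun z : ℂ => z⁻¹ - z⁻¹ ^ 2) (cobounded ℂ) (𝓝 0) := by
    have hinv := tendsto_inv₀_cobounded (α := ℂ)
    simpa using hinv.sub (hinv.pow 2)
  have hbdd : IsBoundedUnder (· ≤ ·) (cobounded ℂ) (norm ∘ fun z => z ^ 3 * q z) :=
    isBoundedUnder_of_eventually_le ((tendsto_norm_cobounded_atTop.eventually_gt_atTop R).mono hq)
  rw [← Metric.cobounded_eq_cocompact]
  exact (hlim.zero_mul_isBoundedUnder_le hbdd).congr fun z => (hdecomp z).symm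

theorem no_quadratic_differentials_general (q : ℂ → ℂ)
    (hq : DifferentiableOn ℂ q (({0, 1} : Set ℂ)ᶜ))
    (C r : ℝ) (hr : 0 < r)
    (h0 : ∀ z : ℂ, 0 < ‖z‖ → ‖z‖ < r →
      ‖z * q z‖ ≤ C)
    (h1 : ∀ z : ℂ, 0 < ‖z - 1‖ → ‖z - 1‖ < r →
      ‖(z - 1) * q z‖ ≤ C)
    (hinf : ∀ z : ℂ, 1 / r < ‖z‖ → ‖z ^ 3 * q z‖ ≤ C) :
    ∀ z ∈ (({0, 1} : Set ℂ)ᶜ), q z = 0 := by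
  set g : ℂ → ℂ := fun z => z * (z - 1) * q z
  have hgd : DifferentiableOn ℂ g (↑({0, 1} : Finset ℂ))ᶜ := by
    rw [Finset.coe_pair]
    fun_prop
  have hgb : ∀ c ∈ ({0, 1} : Finset ℂ), g =O[𝓝[≠] c] fun _ => (1 : ℝ) := by
    simp only [Finset.mem_insert, Finset.mem_singleton, forall_eq_or_imp, forall_eq]
    constructor
    · refine (isBigO_one_nhdsNE_mul_of_norm_le (k := (· - 1)) hr (by fun_prop)
        (by simpa only [sub_zero] using h0)).congr_left fun z => ?_
      ring
    · exact (isBigO_one_nhdsNE_mul_of_norm_le (k := id) hr (by fun_prop) h1).congr_left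
        fun z => (mul_assoc _ _ _).symm
  obtain ⟨F, hF, hFg⟩ := Complex.exists_differentiable_eqOn_compl_of_isBigO_one hgd hgb
  have hFlim : Tendsto F (cocompact ℂ) (𝓝 0) :=
    (tendsto_mul_sub_one_mul_cocompact_of_norm_pow_three_mul_le hinf).congr'
      (eventually_of_mem (Finset.finite_toSet _).isCompact.compl_mem_cocompact
        fun z hz => (hFg hz).symm)
  intro z hz
  have hgz : g z = 0 :=
    (hFg (by simpa using hz)).symm.trans (hF.apply_eq_of_tendsto_cocompact z hFlim)
  simp only [Set.mem_compl_iff, Set.mem_insert_iff, Set.mem_singleton_iff, not_or] at hz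
  simpa [g, hz.1, sub_ne_zero.2 hz.2] using hgz

/-- Let `q` be holomorphic on `ℂ ∖ {0, 1}` with `z·q(z)` bounded near `0`,
`(z−1)·q(z)` bounded near `1`, and `z³·q(z)` bounded near `∞`; i.e. there are `C > 0` and
`r > 0` with `|z·q(z)| ≤ C` for `0 < |z| < r`, `|(z−1)·q(z)| ≤ C` for `0 < |z−1| < r`,
and `|z³·q(z)| ≤ C` for `|z| > 1/r`.  Then `q` is identically zero on `ℂ ∖ {0,1}`. -/
theorem no_quadratic_differentials (q : ℂ → ℂ)
    (hq : DifferentiableOn ℂ q (({0, 1} : Set ℂ)ᶜ))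
    (C r : ℝ) (hC : 0 < C) (hr : 0 < r)
    (h0 : ∀ z : ℂ, 0 < ‖z‖ → ‖z‖ < r →
      ‖z * q z‖ ≤ C)
    (h1 : ∀ z : ℂ, 0 < ‖z - 1‖ → ‖z - 1‖ < r →
      ‖(z - 1) * q z‖ ≤ C)
    (hinf : ∀ z : ℂ, 1 / r < ‖z‖ → ‖z ^ 3 * q z‖ ≤ C) :
    ∀ z ∈ (({0, 1} : Set ℂ)ᶜ), q z = 0 :=
  no_quadratic_differentials_general q hq C r hr h0 h1 hinf
end
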